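/- Let G = (E, V) be a locally finite weighted graph and suppose there is a sequence (x_n)_{n ∈ ℕ} of vertices such that Σ_{y ~ x_n} E(y, x_n)² → ∞ and (Σ_{y ~ x_n} E(y, x_n))² / Σ_{y ~ x_n} E(y, x_n)² → ∞ as n → ∞. Then the domains of the closed operators Δ_G and A_G are different: 𝒟(Δ_G) ≠ 𝒟(A_G). In particular, if G is a simple graph of unbounded degree, then 𝒟(Δ_G) ≠ 𝒟(A_G). -/

import Mathlib

noncomputable section

open scoped ENNReal

/-- The Hilbert space ℓ²(V) with complex coefficients. -/
abbrev l2 (V : Type*) := lp (fun _ : V => ℂ) 2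

/-- The dense subspace `C_c(G)` of finitely supported functions in ℓ²(V). -/
def Cc (V : Type*) : Submodule ℂ (l2 V) where
  carrier := {f | (Function.support (⇑f : V → ℂ)).Finite}
  add_mem' := by
    intro f g hf hg
    exact ((hf.union hg).subset (by rw [lp.coeFn_add]; exact Function.support_add _ _))
  zero_mem' := by
    have h0 : (Function.support (⇑(0 : l2 V) : V → ℂ)) = ∅ := by
      ext x; simp only [Set.mem_empty_iff_false, iff_false, Function.mem_support, not_not]
      exact congrFun (lp.coeFn_zero _ _) x
    simp only [Set.mem_setOf_eq, h0, Set.finite_empty]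
  smul_mem' := by
    intro c f hf
    refine hf.subset ?_
    intro x hx
    simp only [Function.mem_support, lp.coeFn_smul, Pi.smul_apply, smul_eq_mul] at hx ⊢
    intro h0
    exact hx (by rw [h0, mul_zero])

/-- A densely defined operator is essentially self-adjoint if it is closable
and its closure is self-adjoint. -/
def IsEssentiallySelfAdjoint {H : Type*} [NormedAddCommGroup H] [InnerProductSpace ℂ H]
    [CompleteSpace H] (T : H →ₗ.[ℂ] H) : Prop :=
  T.IsClosable ∧ IsSelfAdjoint T.closure

/-!
Both operators are closable because every coordinate of `A_G f` and `Δ_G f` is a finite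
combination of coordinates of `f`. If `𝒟(Δ_G) = 𝒟(A_G)`, the closed graph theorem bounds `Δ_G` by the graph norm of `A_G`:
`‖Δ_G f‖ ≤ C ‖(f, A_G f)‖`. Testing this on the unit vector `δ_v` gives
`‖A_G δ_v‖ = (Σ_y E(y, v)²)^{1/2}` and `|(Δ_G δ_v)(v)| = |Σ_y E(v, y)|`, hence
`(Σ_y E(y, v))² / Σ_y E(y, v)² ≤ C²` as soon as `Σ_y E(y, v)² ≥ 1`, which the sequence `x_n`
violates. For a simple graph both sums are the degree.
-/

open Filter Function

namespace LinearPMap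

variable {𝕜 E : Type*} [NontriviallyNormedField 𝕜] [NormedAddCommGroup E] [NormedSpace 𝕜 E]

theorem isClosable_of_continuous_apply {ι : Type*} {F : ι → Type*}
    [∀ i, NormedAddCommGroup (F i)] [∀ i, NormedSpace 𝕜 (F i)] {p : ℝ≥0∞} [Fact (1 ≤ p)]
    {T : E →ₗ.[𝕜] lp F p} (h : ∀ i, ∃ φ : E →L[𝕜] F i, ∀ f : T.domain, T f i = φ f) :
    T.IsClosable := by
  choose φ hφ using h
  refine ⟨T.graph.topologicalClosure.toLinearPMap,
    (Submodule.toLinearPMap_graph_eq _ fun q hq hq₁ => ?_).symm⟩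
  let K : Set (E × lp F p) := ⋂ i, {q | q.2 i = φ i q.1}
  have hK : _root_.IsClosed K := isClosed_iInter fun i =>
    isClosed_eq ((lp.evalCLM 𝕜 F p i).continuous.comp continuous_snd)
      ((φ i).continuous.comp continuous_fst)
  have hgraph : (T.graph : Set (E × lp F p)) ⊆ K := by
    intro r hr
    obtain ⟨f, rfl⟩ := T.mem_graph_iff'.1 hr
    exact Set.mem_iInter.2 fun i => hφ i f
  have hqK : q ∈ K := closure_minimal hgraph hK hq
  ext i
  simpa [K, hq₁] using Set.mem_iInter.1 hqK i

theorem exists_bound_of_domain_le {F G : Type*} [CompleteSpace E]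
    [NormedAddCommGroup F] [NormedSpace 𝕜 F] [CompleteSpace F]
    [NormedAddCommGroup G] [NormedSpace 𝕜 G] [CompleteSpace G]
    {S : E →ₗ.[𝕜] F} {T : E →ₗ.[𝕜] G} (hS : S.IsClosed) (hT : T.IsClosed)
    (h : S.domain ≤ T.domain) :
    ∃ C, ∀ f : S.domain, ‖T (Submodule.inclusion h f)‖ ≤ C * ‖((f : E), S f)‖ := by
  have : CompleteSpace S.graph := completeSpace_coe_iff_isComplete.mpr hS.isComplete
  have hdom : ∀ g : S.graph, (g : E × F).1 ∈ T.domain := by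
    rintro ⟨_, hg⟩
    obtain ⟨f, rfl⟩ := S.mem_graph_iff'.1 hg
    exact h f.2
  let ψ : S.graph →ₗ[𝕜] G :=
    T.toFun ∘ₗ ((LinearMap.fst 𝕜 E F ∘ₗ S.graph.subtype).codRestrict T.domain hdom)
  have hψ : _root_.IsClosed (ψ.graph : Set (S.graph × G)) := by
    have : (ψ.graph : Set (S.graph × G)) =
        (fun q : S.graph × G => ((q.1 : E × F).1, q.2)) ⁻¹' T.graph := by
      ext ⟨g, w⟩
      simp only [SetLike.mem_coe, LinearMap.mem_graph_iff, Set.mem_preimage, mem_graph_iff]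
      exact ⟨fun hw => ⟨⟨_, hdom g⟩, rfl, hw.symm⟩,
        fun ⟨y, hy, hw⟩ => hw.symm.trans (congrArg T (Subtype.ext hy))⟩
    rw [this]
    exact hT.preimage (by fun_prop)
  let Ψ := ContinuousLinearMap.ofIsClosedGraph hψ
  refine ⟨‖Ψ‖, fun f => ?_⟩
  exact Ψ.le_opNorm ⟨((f : E), S f), S.mem_graph f⟩

end LinearPMap

theorem lp.norm_sq_eq_tsum {ι : Type*} {F : ι → Type*} [∀ i, NormedAddCommGroup (F i)]
    (f : lp F 2) : ‖f‖ ^ 2 = ∑' i, ‖f i‖ ^ 2 := by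
  simpa only [ENNReal.toReal_ofNat, Real.rpow_two] using
    lp.norm_rpow_eq_tsum (p := 2) (by simp) f

theorem ContinuousLinearMap.exists_eq_finsum_mul {𝕜 H ι : Type*} [NontriviallyNormedField 𝕜]
    [NormedAddCommGroup H] [NormedSpace 𝕜 H] {c : ι → 𝕜} (hc : (support c).Finite)
    (L : ι → H →L[𝕜] 𝕜) : ∃ φ : H →L[𝕜] 𝕜, ∀ f, φ f = ∑ᶠ i, c i * L i f :=
  ⟨∑ i ∈ hc.toFinset, c i • L i, fun f => by
    rw [finsum_eq_sum_of_support_subset _ fun i hi =>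
      hc.mem_toFinset.2 fun hci => hi (by simp [hci])]
    simp⟩

theorem finsum_eq_natCard_of_forall_eq_zero_or_eq_one {α : Type*} {f : α → ℝ}
    (hf : ∀ a, f a = 0 ∨ f a = 1) : ∑ᶠ a, f a = Nat.card {a | f a ≠ 0} := by
  have hcast : ((∑ᶠ a ∈ {a | f a ≠ 0}, 1 : ℕ) : ℝ) = ∑ᶠ a ∈ {a | f a ≠ 0}, (1 : ℝ) := by
    simp only [finsum_mem_def]
    exact (Nat.castAddMonoidHom ℝ).map_finsum_of_injective Nat.cast_injective _ |>.trans
      (finsum_congr fun a => by simp [Set.indicator_apply])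
  rw [Nat.card_coe_set_eq, ← finsum_one, hcast, finsum_mem_def]
  exact finsum_congr fun a => by rcases hf a with h | h <;> simp [h]

theorem sq_div_le_sq_of_abs_le_mul_sqrt {t s C : ℝ} (hs : 0 < s) (h : |t| ≤ C * √s) :
    t ^ 2 / s ≤ C ^ 2 := by
  rw [div_le_iff₀ hs, ← sq_abs]
  calc |t| ^ 2 ≤ (C * √s) ^ 2 := pow_le_pow_left₀ (abs_nonneg t) h 2
    _ = C ^ 2 * s := by rw [mul_pow, Real.sq_sqrt hs.le]

section WeightedGraph

variable {V : Type*} {E : V → V → ℝ}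

theorem exists_seq_tendsto_of_simple (hEsymm : ∀ x y, E x y = E y x)
    (h01 : ∀ x y, E x y = 0 ∨ E x y = 1) (hdeg : ∀ N : ℕ, ∃ x, N ≤ Nat.card {z | E x z ≠ 0}) :
    ∃ x : ℕ → V,
      Tendsto (fun n => ∑ᶠ y, E y (x n) ^ 2) atTop atTop ∧
      Tendsto (fun n => (∑ᶠ y, E y (x n)) ^ 2 / ∑ᶠ y, E y (x n) ^ 2) atTop atTop := by
  choose x hx using hdeg
  have hsq : ∀ n y, E y (x n) ^ 2 = E y (x n) := fun n y => by
    rcases h01 y (x n) with h | h <;> simp [h]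
  have hsum : ∀ n, ∑ᶠ y, E y (x n) = Nat.card {z | E (x n) z ≠ 0} := fun n => by
    rw [finsum_congr fun y => hEsymm y (x n)]
    exact finsum_eq_natCard_of_forall_eq_zero_or_eq_one (h01 (x n))
  have hdeg : Tendsto (fun n => (Nat.card {z | E (x n) z ≠ 0} : ℝ)) atTop atTop :=
    tendsto_atTop_mono (fun n => by exact_mod_cast hx n) tendsto_natCast_atTop_atTop
  refine ⟨x, ?_⟩
  simp only [hsq, hsum]
  simp only [sq, mul_self_div_self]
  exact ⟨hdeg, hdeg⟩

theorem single_mem_Cc [DecidableEq V] (v : V) : lp.single 2 v (1 : ℂ) ∈ Cc V :=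
  (Set.finite_singleton v).subset fun y hy => by
    by_contra hyv
    exact hy (lp.single_apply_ne 2 v 1 hyv)

theorem adjacency_isClosable {A : l2 V →ₗ.[ℂ] l2 V} (hlocfin : ∀ x, {y | E x y ≠ 0}.Finite)
    (hA : ∀ f : A.domain, ∀ x, A f x = ∑ᶠ y, (E x y : ℂ) * (f : l2 V) y) : A.IsClosable :=
  LinearPMap.isClosable_of_continuous_apply fun x => by
    obtain ⟨φ, hφ⟩ := ContinuousLinearMap.exists_eq_finsum_mul (c := fun y => (E x y : ℂ))
      ((hlocfin x).subset fun y hy => by simpa using hy) (lp.evalCLM ℂ _ 2)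
    exact ⟨φ, fun f => (hA f x).trans (hφ f).symm⟩

theorem laplacian_isClosable {Δ : l2 V →ₗ.[ℂ] l2 V} (hlocfin : ∀ x, {y | E x y ≠ 0}.Finite)
    (hΔ : ∀ f : Δ.domain, ∀ x, Δ f x = ∑ᶠ y, (E x y : ℂ) * ((f : l2 V) x - (f : l2 V) y)) :
    Δ.IsClosable :=
  LinearPMap.isClosable_of_continuous_apply fun x => by
    obtain ⟨φ, hφ⟩ := ContinuousLinearMap.exists_eq_finsum_mul (c := fun y => (E x y : ℂ))
      ((hlocfin x).subset fun y hy => by simpa using hy)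
      fun y => lp.evalCLM ℂ (fun _ => ℂ) 2 x - lp.evalCLM ℂ _ 2 y
    exact ⟨φ, fun f => (hΔ f x).trans (hφ f).symm⟩

variable [DecidableEq V]

theorem adjacency_single_apply {A : l2 V →ₗ.[ℂ] l2 V}
    (hA : ∀ f : A.domain, ∀ x, A f x = ∑ᶠ y, (E x y : ℂ) * (f : l2 V) y)
    {v : V} (hv : lp.single 2 v 1 ∈ A.domain) (x : V) : A ⟨_, hv⟩ x = E x v := by
  rw [hA, finsum_eq_single _ v fun y hy => by simp [Pi.single_eq_of_ne hy]]
  simp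

theorem norm_adjacency_single {A : l2 V →ₗ.[ℂ] l2 V}
    (hA : ∀ f : A.domain, ∀ x, A f x = ∑ᶠ y, (E x y : ℂ) * (f : l2 V) y)
    {v : V} (hfin : (support fun y => E y v).Finite) (hv : lp.single 2 v 1 ∈ A.domain) :
    ‖A ⟨_, hv⟩‖ = √(∑ᶠ y, E y v ^ 2) := by
  rw [← Real.sqrt_sq (norm_nonneg _), lp.norm_sq_eq_tsum,
    tsum_eq_finsum (hfin.subset fun y => by simp [adjacency_single_apply hA hv])]
  simp [adjacency_single_apply hA hv]

theorem abs_finsum_le_norm_laplacian_single {Δ : l2 V →ₗ.[ℂ] l2 V}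
    (hΔ : ∀ f : Δ.domain, ∀ x, Δ f x = ∑ᶠ y, (E x y : ℂ) * ((f : l2 V) x - (f : l2 V) y))
    {v : V} (hloop : E v v = 0) (hv : lp.single 2 v 1 ∈ Δ.domain) :
    |∑ᶠ y, E v y| ≤ ‖Δ ⟨_, hv⟩‖ := by
  have hΔv : Δ ⟨_, hv⟩ v = ∑ᶠ y, E v y := by
    have hcast : ((∑ᶠ y, E v y : ℝ) : ℂ) = ∑ᶠ y, (E v y : ℂ) :=
      Complex.ofRealHom.toAddMonoidHom.map_finsum_of_injective Complex.ofReal_injective _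
    rw [hΔ, hcast]
    refine finsum_congr fun y => ?_
    rcases eq_or_ne y v with rfl | hy
    · simp [hloop]
    · simp [Pi.single_eq_of_ne hy]
  simpa [hΔv] using lp.norm_apply_le_norm (by simp) (Δ ⟨_, hv⟩) v

theorem sq_finsum_div_le_of_closure_bound {A Δ : l2 V →ₗ.[ℂ] l2 V}
    (hdomA : A.domain = Cc V)
    (hA : ∀ f : A.domain, ∀ x, A f x = ∑ᶠ y, (E x y : ℂ) * (f : l2 V) y)
    (hdomΔ : Δ.domain = Cc V)
    (hΔ : ∀ f : Δ.domain, ∀ x, Δ f x = ∑ᶠ y, (E x y : ℂ) * ((f : l2 V) x - (f : l2 V) y))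
    (hdom : A.closure.domain ≤ Δ.closure.domain) {C : ℝ}
    (hC : ∀ f : A.closure.domain,
      ‖Δ.closure (Submodule.inclusion hdom f)‖ ≤ C * ‖((f : l2 V), A.closure f)‖)
    {v : V} (hsymm : ∀ y, E y v = E v y) (hloop : E v v = 0)
    (hfin : (support fun y => E y v).Finite) (hv : 1 ≤ ∑ᶠ y, E y v ^ 2) :
    (∑ᶠ y, E y v) ^ 2 / ∑ᶠ y, E y v ^ 2 ≤ C ^ 2 := by
  have hδA : lp.single 2 v 1 ∈ A.domain := hdomA ▸ single_mem_Cc v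
  have hδΔ : lp.single 2 v 1 ∈ Δ.domain := hdomΔ ▸ single_mem_Cc v
  let δ : A.closure.domain := ⟨_, A.le_closure.1 hδA⟩
  have hAδ : A.closure δ = A ⟨_, hδA⟩ := (A.le_closure.2 rfl).symm
  have hΔδ : Δ.closure (Submodule.inclusion hdom δ) = Δ ⟨_, hδΔ⟩ := (Δ.le_closure.2 rfl).symm
  have hgraph : ‖((δ : l2 V), A.closure δ)‖ = √(∑ᶠ y, E y v ^ 2) := by
    rw [Prod.norm_def, hAδ, norm_adjacency_single hA hfin, lp.norm_single (by simp), norm_one,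
      max_eq_right (Real.one_le_sqrt.2 hv)]
  refine sq_div_le_sq_of_abs_le_mul_sqrt (by linarith) ?_
  calc |∑ᶠ y, E y v| = |∑ᶠ y, E v y| := by rw [finsum_congr hsymm]
    _ ≤ ‖Δ ⟨_, hδΔ⟩‖ := abs_finsum_le_norm_laplacian_single hΔ hloop hδΔ
    _ ≤ C * √(∑ᶠ y, E y v ^ 2) := by rw [← hΔδ, ← hgraph]; exact hC δ

end WeightedGraph

theorem stmt6_general {V : Type*} (E : V → V → ℝ)
    (hEsymm : ∀ x y, E x y = E y x)
    (hEloop : ∀ x, E x x = 0)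
    (hlocfin : ∀ x, {y | E x y ≠ 0}.Finite)
    (hcase :
      (∃ x : ℕ → V,
        Filter.Tendsto (fun n => ∑ᶠ y, E y (x n) ^ 2) Filter.atTop Filter.atTop ∧
        Filter.Tendsto (fun n => (∑ᶠ y, E y (x n)) ^ 2 / ∑ᶠ y, E y (x n) ^ 2)
          Filter.atTop Filter.atTop) ∨
      ((∀ x y, E x y = 0 ∨ E x y = 1) ∧
        ∀ N : ℕ, ∃ x, N ≤ Nat.card {z | E x z ≠ 0}))
    (A Δ : l2 V →ₗ.[ℂ] l2 V)
    (hdomA : A.domain = Cc V)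
    (hA : ∀ f : A.domain, ∀ x : V,
      A f x = ∑ᶠ y, (E x y : ℂ) * (f : l2 V) y)
    (hdomΔ : Δ.domain = Cc V)
    (hΔ : ∀ f : Δ.domain, ∀ x : V,
      Δ f x = ∑ᶠ y, (E x y : ℂ) * ((f : l2 V) x - (f : l2 V) y)) :
    Δ.closure.domain ≠ A.closure.domain := by
  classical
  obtain ⟨x, hs, hr⟩ := hcase.elim id fun ⟨h01, hdeg⟩ =>
    exists_seq_tendsto_of_simple hEsymm h01 hdeg
  intro hdom
  obtain ⟨C, hC⟩ := LinearPMap.exists_bound_of_domain_le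
    (adjacency_isClosable hlocfin hA).closure_isClosed
    (laplacian_isClosable hlocfin hΔ).closure_isClosed hdom.ge
  obtain ⟨n, hn₁, hn₂⟩ :=
    ((hs.eventually_ge_atTop 1).and (hr.eventually_gt_atTop (C ^ 2))).exists
  have hfin : (support fun y => E y (x n)).Finite :=
    (hlocfin (x n)).subset fun y hy => by simpa [hEsymm y (x n)] using hy
  exact (sq_finsum_div_le_of_closure_bound hdomA hA hdomΔ hΔ hdom.ge hC
    (fun y => hEsymm y (x n)) (hEloop (x n)) hfin hn₁).not_gt hn₂

theorem stmt6 {V : Type*} [Countable V] (E : V → V → ℝ)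
    (hEsymm : ∀ x y, E x y = E y x) (hEpos : ∀ x y, 0 ≤ E x y)
    (hEloop : ∀ x, E x x = 0)
    (hlocfin : ∀ x, {y | E x y ≠ 0}.Finite)
    (hcase :
      (∃ x : ℕ → V,
        Filter.Tendsto (fun n => ∑ᶠ y, E y (x n) ^ 2) Filter.atTop Filter.atTop ∧
        Filter.Tendsto (fun n => (∑ᶠ y, E y (x n)) ^ 2 / ∑ᶠ y, E y (x n) ^ 2)
          Filter.atTop Filter.atTop) ∨
      ((∀ x y, E x y = 0 ∨ E x y = 1) ∧
        ∀ N : ℕ, ∃ x, N ≤ Nat.card {z | E x z ≠ 0}))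
    (A Δ : l2 V →ₗ.[ℂ] l2 V)
    (hdomA : A.domain = Cc V)
    (hA : ∀ f : A.domain, ∀ x : V,
      A f x = ∑ᶠ y, (E x y : ℂ) * (f : l2 V) y)
    (hdomΔ : Δ.domain = Cc V)
    (hΔ : ∀ f : Δ.domain, ∀ x : V,
      Δ f x = ∑ᶠ y, (E x y : ℂ) * ((f : l2 V) x - (f : l2 V) y)) :
    Δ.closure.domain ≠ A.closure.domain :=
  stmt6_general E hEsymm hEloop hlocfin hcase A Δ hdomA hA hdomΔ hΔ
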